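/- Let U be a finite set and f, g functions from subsets of U to a commutative ring, and suppose f vanishes outside a family F of subsets of U and g vanishes outside a family G. Then Σ_{S∈F, T∈G, S∩T=∅} f(S)g(T) = Σ_{X ∈ ↓F ∩ ↓G} (−1)^{|X|} (Σ_{S ⊇ X, S∈F} f(S))(Σ_{T ⊇ X, T∈G} g(T)), where ↓F denotes the downward closure of F. -/

import Mathlib

/-!
Expanding the products, the right-hand side becomes
`∑ S ∈ F, ∑ T ∈ G, f S * g T * ∑ X ⊆ S ∩ T, (-1) ^ #X`, and the inner alternating sum is `1`
when `S ∩ T = ∅` and `0` otherwise. Only sets `X` lying below some `S ∈ F` and some `T ∈ G`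
contribute, so `X` may range over any family containing `↓F ∩ ↓G`.
-/

open Finset

theorem sum_powerset_inter_neg_one_pow_card {U R : Type*} [DecidableEq U] [CommRing R]
    (S T : Finset U) :
    ∑ X ∈ (S ∩ T).powerset, (-1 : R) ^ #X = if Disjoint S T then 1 else 0 := by
  have h := congrArg (Int.cast : ℤ → R) (sum_powerset_neg_one_pow_card (x := S ∩ T))
  push_cast at h
  simp_rw [h, disjoint_iff_inter_eq_empty]

theorem sum_disjoint_mul_eq_sum_neg_one_pow_mul {U R : Type*} [DecidableEq U] [CommRing R]
    (f g : Finset U → R) (F G 𝒳 : Finset (Finset U))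
    (h𝒳 : ∀ S ∈ F, ∀ T ∈ G, (S ∩ T).powerset ⊆ 𝒳) :
    ∑ S ∈ F, ∑ T ∈ G with Disjoint S T, f S * g T =
      ∑ X ∈ 𝒳, (-1 : R) ^ #X * (∑ S ∈ F with X ⊆ S, f S) * ∑ T ∈ G with X ⊆ T, g T := by
  have filter_eq_powerset : ∀ S ∈ F, ∀ T ∈ G, {X ∈ 𝒳 | X ⊆ S ∧ X ⊆ T} = (S ∩ T).powerset := by
    intro S hS T hT
    ext X
    simp only [mem_filter, mem_powerset, ← subset_inter_iff]
    exact ⟨And.right, fun hX => ⟨h𝒳 S hS T hT (mem_powerset.2 hX), hX⟩⟩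
  calc ∑ S ∈ F, ∑ T ∈ G with Disjoint S T, f S * g T
      = ∑ S ∈ F, ∑ T ∈ G, f S * g T * ∑ X ∈ (S ∩ T).powerset, (-1 : R) ^ #X := by
        simp only [sum_powerset_inter_neg_one_pow_card, mul_ite, mul_one, mul_zero, sum_filter]
    _ = ∑ S ∈ F, ∑ T ∈ G, ∑ X ∈ 𝒳 with X ⊆ S ∧ X ⊆ T, (-1 : R) ^ #X * f S * g T := by
        refine sum_congr rfl fun S hS => sum_congr rfl fun T hT => ?_
        rw [filter_eq_powerset S hS T hT, mul_sum]
        exact sum_congr rfl fun X _ => by ring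
    _ = ∑ S ∈ F, ∑ X ∈ 𝒳 with X ⊆ S, ∑ T ∈ G with X ⊆ T, (-1 : R) ^ #X * f S * g T :=
        sum_congr rfl fun S _ => sum_comm' fun T X => by simp only [mem_filter]; tauto
    _ = ∑ X ∈ 𝒳, ∑ S ∈ F with X ⊆ S, ∑ T ∈ G with X ⊆ T, (-1 : R) ^ #X * f S * g T :=
        sum_comm' fun S X => by simp only [mem_filter]; tauto
    _ = ∑ X ∈ 𝒳, (-1 : R) ^ #X * (∑ S ∈ F with X ⊆ S, f S) * ∑ T ∈ G with X ⊆ T, g T := by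
        simp_rw [mul_assoc, sum_mul_sum, mul_sum]

theorem disjoint_sum_supported_general {U : Type*} [Fintype U] [DecidableEq U]
    {R : Type*} [CommRing R] (f g : Finset U → R) (F G : Finset (Finset U)) :
    (∑ S ∈ F, ∑ T ∈ G.filter (fun T => Disjoint S T), f S * g T) =
      ∑ X ∈ ((Finset.univ : Finset U).powerset.filter
              (fun X => ∃ S ∈ F, X ⊆ S)) ∩
            ((Finset.univ : Finset U).powerset.filter
              (fun X => ∃ T ∈ G, X ⊆ T)),
        (-1 : R) ^ X.card * (∑ S ∈ F.filter (fun S => X ⊆ S), f S) *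
          (∑ T ∈ G.filter (fun T => X ⊆ T), g T) := by
  refine sum_disjoint_mul_eq_sum_neg_one_pow_mul f g F G _ fun S hS T hT X hX => ?_
  rw [mem_powerset, subset_inter_iff] at hX
  simp only [mem_inter, mem_filter, mem_powerset, subset_univ, true_and]
  exact ⟨⟨S, hS, hX.1⟩, ⟨T, hT, hX.2⟩⟩

/-- Kennes' identity with supports: if `f` vanishes outside `F` and `g` outside `G`,
the disjoint-pair sum can be computed summing `X` only over `↓F ∩ ↓G`. -/
theorem disjoint_sum_supported {U : Type*} [Fintype U] [DecidableEq U]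
    {R : Type*} [CommRing R] (f g : Finset U → R) (F G : Finset (Finset U))
    (hf : ∀ S ∉ F, f S = 0) (hg : ∀ T ∉ G, g T = 0) :
    (∑ S ∈ F, ∑ T ∈ G.filter (fun T => Disjoint S T), f S * g T) =
      ∑ X ∈ ((Finset.univ : Finset U).powerset.filter
              (fun X => ∃ S ∈ F, X ⊆ S)) ∩
            ((Finset.univ : Finset U).powerset.filter
              (fun X => ∃ T ∈ G, X ⊆ T)),
        (-1 : R) ^ X.card * (∑ S ∈ F.filter (fun S => X ⊆ S), f S) *
          (∑ T ∈ G.filter (fun T => X ⊆ T), g T) :=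
  disjoint_sum_supported_general f g F G
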